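/- arXiv:2203.00855 — 2 statements merged into one kernel-verified Lean document; each statement's English description precedes it below -/
import Mathlib

section
/- Stretching Lemma, parts (2) and (3): Let σ be a turn sequence with at least one turn. If a point p = (0,b) with b ≠ 0 is reachable by σ, then the entire halfplane H⁺(p) is contained in A(σ); and if a point p = (a,0) with a ≠ 0 is reachable by σ, then the entire halfplane V⁺(p) is contained in A(σ). -/
/-- A turn: left (`L`) or right (`R`). -/
inductive Turn : Type
  | L : Turn
  | R : Turn
  deriving DecidableEq

/-- Rotation of a direction vector by 90° counterclockwise. -/
def rotCCW (d : ℤ × ℤ) : ℤ × ℤ := (-d.2, d.1)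

/-- Rotation of a direction vector by 90° clockwise. -/
def rotCW (d : ℤ × ℤ) : ℤ × ℤ := (d.2, -d.1)

/-- Unit direction of the axis-parallel segment from `u` to `v`. -/
def unitDir (u v : ℤ × ℤ) : ℤ × ℤ := ((v.1 - u.1).sign, (v.2 - u.2).sign)

/-- The set of integer points on the axis-parallel closed segment from `u` to `v`. -/
def segSet (u v : ℤ × ℤ) : Set (ℤ × ℤ) :=
  {q | min u.1 v.1 ≤ q.1 ∧ q.1 ≤ max u.1 v.1 ∧ min u.2 v.2 ≤ q.2 ∧ q.2 ≤ max u.2 v.2}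

/-- A simple rectilinear chain realizing the turn sequence `σ = σ₁⋯σₙ` (as a list,
`σ.get ⟨i, _⟩` is the `(i+1)`-st turn `σ_{i+1}`).  It consists of the points
`pts 0, …, pts (n+1)` with `pts 0 = (0,0)`; consecutive points span nondegenerate
axis-parallel segments, the first segment heads east, the chain turns left (CCW) or
right (CW) at each bend as prescribed by `σ`, and the chain is simple. -/
structure Chain (σ : List Turn) where
  pts : ℕ → ℤ × ℤ
  start_eq : pts 0 = (0, 0)
  first_seg : ∃ t : ℤ, 0 < t ∧ pts 1 = (t, 0)
  axis_parallel : ∀ i ≤ σ.length,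
    ((pts (i + 1)).1 = (pts i).1 ∧ (pts (i + 1)).2 ≠ (pts i).2) ∨
    ((pts (i + 1)).2 = (pts i).2 ∧ (pts (i + 1)).1 ≠ (pts i).1)
  turns : ∀ i, ∀ h : i < σ.length,
    unitDir (pts (i + 1)) (pts (i + 2)) =
      (if σ.get ⟨i, h⟩ = Turn.L then rotCCW else rotCW) (unitDir (pts i) (pts (i + 1)))
  simple_adj : ∀ i, i + 1 ≤ σ.length →
    segSet (pts i) (pts (i + 1)) ∩ segSet (pts (i + 1)) (pts (i + 2)) = {pts (i + 1)}
  simple_nonadj : ∀ i j, i + 1 < j → j ≤ σ.length →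
    segSet (pts i) (pts (i + 1)) ∩ segSet (pts j) (pts (j + 1)) = ∅

/-- `A(σ)`: the set of points reachable by the turn sequence `σ`. -/
def ReachSet (σ : List Turn) : Set (ℤ × ℤ) :=
  {q | ∃ C : Chain σ, C.pts (σ.length + 1) = q}

/-- The halfplane `V⁺(p)` (requires `p.1 ≠ 0` to be meaningful). -/
def Vplus (p : ℤ × ℤ) : Set (ℤ × ℤ) :=
  {q | ∃ i j : ℤ, 0 ≤ i ∧ q = (p.1 + p.1.sign * i, j)}

/-- The halfplane `H⁺(p)` (requires `p.2 ≠ 0` to be meaningful). -/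
def Hplus (p : ℤ × ℤ) : Set (ℤ × ℤ) :=
  {q | ∃ i j : ℤ, 0 ≤ j ∧ q = (i, p.2 + p.2.sign * j)}

/-- The quadrant `Q⁺(p)`. -/
def Qplus (p : ℤ × ℤ) : Set (ℤ × ℤ) := Vplus p ∩ Hplus p

/-- A staircase: consecutive turns always differ. -/
def IsStaircase (σ : List Turn) : Prop := σ.Chain' (· ≠ ·)

/-- The prefix number `δᵢ`: number of `L`s minus number of `R`s among the first `i` turns. -/
def delta (σ : List Turn) (i : ℕ) : ℤ :=
  ((σ.take i).count Turn.L : ℤ) - ((σ.take i).count Turn.R : ℤ)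

/-- The excess number `l - r` of a turn sequence. -/
def excess (σ : List Turn) : ℤ := (σ.count Turn.L : ℤ) - (σ.count Turn.R : ℤ)

/-- `σ` has a hook (two equal consecutive turns, at 1-based positions `k+1, k+2`)
whose prefix number is `≡ d (mod 4)`: `d = 0, 1, 2, 3` for right, up, left, down hooks. -/
def HasHook (σ : List Turn) (d : ℤ) : Prop :=
  ∃ k, ∃ h : k + 1 < σ.length,
    σ.get ⟨k, by omega⟩ = σ.get ⟨k + 1, h⟩ ∧ delta σ (k + 1) % 4 = d

/-- `σ` has some hook, i.e. two equal consecutive turns. -/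
def HasAnyHook (σ : List Turn) : Prop :=
  ∃ k, ∃ h : k + 1 < σ.length, σ.get ⟨k, by omega⟩ = σ.get ⟨k + 1, h⟩

/-- A set `S ⊆ ℤ²` is connected: any two points of `S` are joined by a path inside `S`
whose consecutive points are at `L¹`-distance `1`. -/
def GridConnected (S : Set (ℤ × ℤ)) : Prop :=
  ∀ p ∈ S, ∀ q ∈ S, ∃ (n : ℕ) (f : ℕ → ℤ × ℤ),
    f 0 = p ∧ f n = q ∧ (∀ i ≤ n, f i ∈ S) ∧
    ∀ i < n, |(f (i + 1)).1 - (f i).1| + |(f (i + 1)).2 - (f i).2| = 1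

/-- `q` lies on the boundary of the smallest axis-parallel bounding box of the chain `C`
(for `q` a point of the chain: it attains an extreme coordinate). -/
def OnBBoxBoundary (σ : List Turn) (C : Chain σ) (q : ℤ × ℤ) : Prop :=
  (∀ i ≤ σ.length + 1, q.1 ≤ (C.pts i).1) ∨ (∀ i ≤ σ.length + 1, (C.pts i).1 ≤ q.1) ∨
  (∀ i ≤ σ.length + 1, q.2 ≤ (C.pts i).2) ∨ (∀ i ≤ σ.length + 1, (C.pts i).2 ≤ q.2)

/-- The last segment of the chain `C` is entirely contained in one side of the smallest
axis-parallel bounding box of `C`. -/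
def LastSegOnSide (σ : List Turn) (C : Chain σ) : Prop :=
  ((C.pts σ.length).1 = (C.pts (σ.length + 1)).1 ∧
     ∀ i ≤ σ.length + 1, (C.pts σ.length).1 ≤ (C.pts i).1) ∨
  ((C.pts σ.length).1 = (C.pts (σ.length + 1)).1 ∧
     ∀ i ≤ σ.length + 1, (C.pts i).1 ≤ (C.pts σ.length).1) ∨
  ((C.pts σ.length).2 = (C.pts (σ.length + 1)).2 ∧
     ∀ i ≤ σ.length + 1, (C.pts σ.length).2 ≤ (C.pts i).2) ∨
  ((C.pts σ.length).2 = (C.pts (σ.length + 1)).2 ∧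
     ∀ i ≤ σ.length + 1, (C.pts i).2 ≤ (C.pts σ.length).2)

/-- The turn `σₘ` (1-based indexing). -/
def turnAt (σ : List Turn) (m : ℕ) : Turn := σ.getD (m - 1) Turn.L

/-- The suffix `σ_k ⋯ σ_n` contains no hook and all its prefix numbers `δᵢ`,
`k - 1 ≤ i ≤ n`, are `≡ 1` or `2 (mod 4)` (the combinatorial description of a
NW-staircase containing the endpoint). -/
def GoodSuffix (σ : List Turn) (k : ℕ) : Prop :=
  1 ≤ k ∧ k ≤ σ.length ∧
  (∀ m : ℕ, k ≤ m → m < σ.length → turnAt σ m ≠ turnAt σ (m + 1)) ∧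
  (∀ i : ℕ, k - 1 ≤ i → i ≤ σ.length → delta σ i % 4 = 1 ∨ delta σ i % 4 = 2)

open Classical in
/-- `₋ₓm₊ᵧᵖ(σ)`: taking the longest good suffix (i.e. the least `k` with
`GoodSuffix σ k`), the number of indices `i` with `k - 1 ≤ i ≤ n` and
`δᵢ ≡ 1 (mod 4)`; `0` if no good suffix exists. -/
noncomputable def mNWp (σ : List Turn) : ℕ :=
  if ∃ k, GoodSuffix σ k then
    Nat.card {i : ℕ // sInf {k | GoodSuffix σ k} - 1 ≤ i ∧ i ≤ σ.length ∧
      delta σ i % 4 = 1}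
  else 0

/-- The number of vertical segments of the chain `C` meeting the closed horizontal
segment from the origin to `(a, 0)`. -/
def verticalCrossCount (σ : List Turn) (C : Chain σ) (a : ℤ) : ℕ :=
  ((Finset.range (σ.length + 1)).filter fun i =>
    (C.pts i).1 = (C.pts (i + 1)).1 ∧
    0 ≤ (C.pts i).1 ∧ (C.pts i).1 ≤ a ∧
    min (C.pts i).2 (C.pts (i + 1)).2 ≤ 0 ∧ 0 ≤ max (C.pts i).2 (C.pts (i + 1)).2).card

/-- The unit direction of the `(i+1)`-st segment of the chain `C`. -/
def dirOf (σ : List Turn) (C : Chain σ) (i : ℕ) : ℤ × ℤ := unitDir (C.pts i) (C.pts (i + 1))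

/-- `z₁mz₂ᵒ(C)`: the number of `z₂`-segments in the maximal `(z₁,z₂)`-staircase subchain
of `C` containing the origin (the longest prefix of segments directed `z₁` or `z₂`);
`0` if no such subchain exists. -/
noncomputable def stairCountO (σ : List Turn) (C : Chain σ) (z₁ z₂ : ℤ × ℤ) : ℕ :=
  Nat.card {i : ℕ // i ≤ σ.length ∧ dirOf σ C i = z₂ ∧
    ∀ j ≤ i, dirOf σ C j = z₁ ∨ dirOf σ C j = z₂}

/-- `z₁mz₂ᵖ(C)`: the number of `z₂`-segments in the maximal `(z₁,z₂)`-staircase subchain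
of `C` containing the endpoint (the longest suffix of segments directed `z₁` or `z₂`);
`0` if no such subchain exists. -/
noncomputable def stairCountP (σ : List Turn) (C : Chain σ) (z₁ z₂ : ℤ × ℤ) : ℕ :=
  Nat.card {i : ℕ // i ≤ σ.length ∧ dirOf σ C i = z₂ ∧
    ∀ j, i ≤ j → j ≤ σ.length → dirOf σ C j = z₁ ∨ dirOf σ C j = z₂}


/-!
Two operations on a chain keep every segment direction and keep the chain simple. One applies
a coordinatewise strictly monotone map fixing `0` to all vertices; `x ↦ x + sign x * m` pushes
points away from the axes. The other moves every vertex except the origin with `0 ≤ s * x`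
(`s = ±1`) by `s`, so that afterwards the line `x = 0` only meets the chain at the origin and
at crossings. The same shift in `y` must leave the first segment on `y = 0` alone, so it starts
at the second vertex, which needs a turn. In every case a coordinatewise monotone map sends the
new vertices back to the old ones, hence each new segment into the old one, so disjointness of
segments is inherited; adjacent segments are perpendicular and meet only at their common vertex.

The shift moves an endpoint `(0, b)` to `(±1, b)` and an endpoint `(a, 0)` to `(a, ±1)`, and
pushing away from the axes then fills the half-planes.
-/

open Function Set

lemma segSet_eq_uIcc_prod (u v : ℤ × ℤ) : segSet u v = uIcc u.1 v.1 ×ˢ uIcc u.2 v.2 :=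
  ext fun _ => and_assoc.symm

lemma mapsTo_segSet {g₁ g₂ : ℤ → ℤ} (hg₁ : Monotone g₁) (hg₂ : Monotone g₂)
    {u v u' v' : ℤ × ℤ} (hu : Prod.map g₁ g₂ u = u') (hv : Prod.map g₁ g₂ v = v') :
    MapsTo (Prod.map g₁ g₂) (segSet u v) (segSet u' v') := by
  subst hu hv
  rw [segSet_eq_uIcc_prod, segSet_eq_uIcc_prod]
  exact hg₁.mapsTo_uIcc.prodMap hg₂.mapsTo_uIcc

lemma segSet_inter_segSet_eq_singleton {u v w : ℤ × ℤ}
    (h : (v.1 = u.1 ∧ w.2 = v.2) ∨ (v.2 = u.2 ∧ w.1 = v.1)) :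
    segSet u v ∩ segSet v w = {v} := by
  refine eq_singleton_iff_unique_mem.2 ⟨⟨?_, ?_⟩, fun p ⟨hpu, hpw⟩ => ?_⟩
  · exact ⟨min_le_right _ _, le_max_right _ _, min_le_right _ _, le_max_right _ _⟩
  · exact ⟨min_le_left _ _, le_max_left _ _, min_le_left _ _, le_max_left _ _⟩
  · obtain ⟨h1, h2, h3, h4⟩ := hpu
    obtain ⟨h5, h6, h7, h8⟩ := hpw
    exact Prod.ext (by omega) (by omega)

lemma StrictMono.sign_sub {f : ℤ → ℤ} (hf : StrictMono f) (a b : ℤ) :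
    (f b - f a).sign = (b - a).sign := by
  rcases lt_trichotomy a b with h | rfl | h
  · rw [Int.sign_eq_one_of_pos (sub_pos.2 (hf h)), Int.sign_eq_one_of_pos (sub_pos.2 h)]
  · simp
  · rw [Int.sign_eq_neg_one_of_neg (sub_neg.2 (hf h)), Int.sign_eq_neg_one_of_neg (sub_neg.2 h)]

lemma unitDir_prodMap {f₁ f₂ : ℤ → ℤ} (hf₁ : StrictMono f₁) (hf₂ : StrictMono f₂)
    (u v : ℤ × ℤ) : unitDir (Prod.map f₁ f₂ u) (Prod.map f₁ f₂ v) = unitDir u v := by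
  simp only [unitDir, Prod.map_fst, Prod.map_snd, hf₁.sign_sub, hf₂.sign_sub]

lemma eq_iff_of_unitDir_eq {u v u' v' : ℤ × ℤ} (h : unitDir u' v' = unitDir u v) :
    (v'.1 = u'.1 ↔ v.1 = u.1) ∧ (v'.2 = u'.2 ↔ v.2 = u.2) := by
  have eq_iff (a b : ℤ) : a = b ↔ (a - b).sign = 0 := by
    rw [Int.sign_eq_zero_iff_zero, sub_eq_zero]
  simp only [unitDir, Prod.ext_iff] at h
  rw [eq_iff v'.1, eq_iff v.1, eq_iff v'.2, eq_iff v.2, h.1, h.2]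
  exact ⟨Iff.rfl, Iff.rfl⟩

lemma perp_of_turn {c : Prop} [Decidable c] {u v w : ℤ × ℤ}
    (h : unitDir v w = (if c then rotCCW else rotCW) (unitDir u v)) :
    (v.1 = u.1 → w.2 = v.2) ∧ (v.2 = u.2 → w.1 = v.1) := by
  have key : ((w.2 - v.2).sign = 0 ↔ (v.1 - u.1).sign = 0) ∧
      ((w.1 - v.1).sign = 0 ↔ (v.2 - u.2).sign = 0) := by
    split_ifs at h <;> simp only [unitDir, rotCCW, rotCW, Prod.ext_iff] at h <;> simp [h]
  simp only [Int.sign_eq_zero_iff_zero, sub_eq_zero] at key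
  exact ⟨key.1.2, key.2.2⟩

lemma sign_eq_one_or_neg_one {x : ℤ} (hx : x ≠ 0) : x.sign = 1 ∨ x.sign = -1 := by
  rcases hx.lt_or_gt with h | h
  exacts [Or.inr (Int.sign_eq_neg_one_of_neg h), Or.inl (Int.sign_eq_one_of_pos h)]

section

variable {σ : List Turn} {s : ℤ}

lemma Chain.fst_pts_two (C : Chain σ) (hσ : 1 ≤ σ.length) : (C.pts 2).1 = (C.pts 1).1 := by
  obtain ⟨t, -, h1⟩ := C.first_seg
  exact (perp_of_turn (C.turns 0 hσ)).2 (by rw [h1, C.start_eq])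

def Chain.ofRetraction (C : Chain σ) (pts : ℕ → ℤ × ℤ) (h0 : pts 0 = (0, 0))
    (hdir : ∀ i ≤ σ.length, unitDir (pts i) (pts (i + 1)) = unitDir (C.pts i) (C.pts (i + 1)))
    {g₁ g₂ : ℤ → ℤ} (hg₁ : Monotone g₁) (hg₂ : Monotone g₂)
    (hg : ∀ i ≤ σ.length + 1, Prod.map g₁ g₂ (pts i) = C.pts i) : Chain σ :=
  have axis_parallel : ∀ i ≤ σ.length,
      ((pts (i + 1)).1 = (pts i).1 ∧ (pts (i + 1)).2 ≠ (pts i).2) ∨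
      ((pts (i + 1)).2 = (pts i).2 ∧ (pts (i + 1)).1 ≠ (pts i).1) := fun i hi => by
    obtain ⟨h1, h2⟩ := eq_iff_of_unitDir_eq (hdir i hi)
    simpa only [ne_eq, h1, h2] using C.axis_parallel i hi
  have turns : ∀ i, ∀ h : i < σ.length, unitDir (pts (i + 1)) (pts (i + 2)) =
      (if σ.get ⟨i, h⟩ = Turn.L then rotCCW else rotCW) (unitDir (pts i) (pts (i + 1))) :=
    fun i h => by rw [hdir (i + 1) h, hdir i h.le]; exact C.turns i h
  { pts
    start_eq := h0
    first_seg := by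
      obtain ⟨t, ht, h1⟩ := C.first_seg
      have hd := hdir 0 (Nat.zero_le _)
      rw [h0, C.start_eq, h1] at hd
      simp only [unitDir, sub_zero, Int.sign_zero, Int.sign_eq_one_of_pos ht, Prod.ext_iff] at hd
      exact ⟨(pts 1).1, Int.sign_eq_one_iff_pos.1 hd.1,
        Prod.ext rfl (Int.sign_eq_zero_iff_zero.1 hd.2)⟩
    axis_parallel
    turns
    simple_adj := fun i hi => by
      have hperp := perp_of_turn (turns i hi)
      refine segSet_inter_segSet_eq_singleton ?_
      rcases axis_parallel i (by omega) with ⟨h, -⟩ | ⟨h, -⟩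
      exacts [Or.inl ⟨h, hperp.1 h⟩, Or.inr ⟨h, hperp.2 h⟩]
    simple_nonadj := fun i j hij hj => by
      refine eq_empty_of_forall_notMem fun p ⟨hpi, hpj⟩ => ?_
      have hmaps := fun k (hk : k ≤ σ.length) =>
        mapsTo_segSet hg₁ hg₂ (hg k (by omega)) (hg (k + 1) (by omega))
      have hC := C.simple_nonadj i j hij hj
      exact hC.subset ⟨hmaps i (by omega) hpi, hmaps j hj hpj⟩ }

/-- The vertices from index `k` on are moved by `Prod.map f₁ f₂`; the earlier ones stay. -/
theorem Chain.prodMap_mem_reachSet (C : Chain σ) {k : ℕ} (hk : 1 ≤ k) (hkn : k ≤ σ.length + 1)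
    {f₁ f₂ g₁ g₂ : ℤ → ℤ} (hf₁ : StrictMono f₁) (hf₂ : StrictMono f₂)
    (hg₁ : Monotone g₁) (hg₂ : Monotone g₂) (hgf₁ : LeftInverse g₁ f₁) (hgf₂ : LeftInverse g₂ f₂)
    (hfix : ∀ i < k, Prod.map g₁ g₂ (C.pts i) = C.pts i)
    (hjoin : unitDir (C.pts (k - 1)) (Prod.map f₁ f₂ (C.pts k)) =
      unitDir (C.pts (k - 1)) (C.pts k)) :
    Prod.map f₁ f₂ (C.pts (σ.length + 1)) ∈ ReachSet σ := by
  let pts i := if i < k then C.pts i else Prod.map f₁ f₂ (C.pts i)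
  have hdir : ∀ i ≤ σ.length,
      unitDir (pts i) (pts (i + 1)) = unitDir (C.pts i) (C.pts (i + 1)) := fun i _ => by
    rcases lt_trichotomy (i + 1) k with hi | hi | hi
    · simp only [pts, if_pos hi, if_pos (Nat.lt_of_succ_lt hi)]
    · obtain rfl : i = k - 1 := by omega
      simp only [pts, if_pos (Nat.sub_lt hk one_pos), hi, lt_irrefl, if_false, hjoin]
    · simp only [pts, if_neg (by omega : ¬ i < k), if_neg hi.not_gt, unitDir_prodMap hf₁ hf₂]
  have hg : ∀ i ≤ σ.length + 1, Prod.map g₁ g₂ (pts i) = C.pts i := fun i _ => by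
    by_cases hi : i < k
    · simp only [pts, if_pos hi, hfix i hi]
    · simp only [pts, if_neg hi]
      exact Prod.ext (hgf₁ _) (hgf₂ _)
  have h0 : pts 0 = (0, 0) := by simp only [pts, if_pos (show 0 < k from hk), C.start_eq]
  exact ⟨C.ofRetraction pts h0 hdir hg₁ hg₂ hg, if_neg (by omega)⟩

lemma strictMono_add_sign_mul {m : ℤ} (hm : 0 ≤ m) :
    StrictMono fun x : ℤ => x + x.sign * m := by
  intro a b hab
  rcases lt_trichotomy a 0 with ha | rfl | ha <;> rcases lt_trichotomy b 0 with hb | rfl | hb <;>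
    simp only [Int.sign_eq_neg_one_of_neg, Int.sign_eq_one_of_pos, Int.sign_zero, *] <;> omega

lemma monotone_max_sub_add_min_add (m : ℤ) :
    Monotone fun x : ℤ => max (x - m) 0 + min (x + m) 0 :=
  fun a b hab => by dsimp only; omega

lemma leftInverse_max_sub_add_min_add {m : ℤ} (hm : 0 ≤ m) :
    LeftInverse (fun x : ℤ => max (x - m) 0 + min (x + m) 0) fun x => x + x.sign * m := by
  intro x
  rcases lt_trichotomy x 0 with hx | rfl | hx <;>
    simp only [Int.sign_eq_neg_one_of_neg, Int.sign_eq_one_of_pos, Int.sign_zero, *] <;> omega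

theorem add_sign_mul_mem_reachSet {x y m n : ℤ} (h : (x, y) ∈ ReachSet σ)
    (hm : 0 ≤ m) (hn : 0 ≤ n) : (x + x.sign * m, y + y.sign * n) ∈ ReachSet σ := by
  obtain ⟨C, hC⟩ := h
  have hf₁ := strictMono_add_sign_mul hm
  have hf₂ := strictMono_add_sign_mul hn
  have hg0 : Prod.map (fun x : ℤ => max (x - m) 0 + min (x + m) 0)
      (fun x : ℤ => max (x - n) 0 + min (x + n) 0) (C.pts 0) = C.pts 0 := by
    simp only [C.start_eq, Prod.map_apply]
    exact Prod.ext (by omega) (by omega)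
  have hf0 : Prod.map (fun x : ℤ => x + x.sign * m) (fun x : ℤ => x + x.sign * n) (C.pts 0) =
      C.pts 0 := by
    simp [C.start_eq]
  have hjoin := unitDir_prodMap hf₁ hf₂ (C.pts 0) (C.pts 1)
  rw [hf0] at hjoin
  have := C.prodMap_mem_reachSet le_rfl (by omega) hf₁ hf₂ (monotone_max_sub_add_min_add m)
    (monotone_max_sub_add_min_add n) (leftInverse_max_sub_add_min_add hm)
    (leftInverse_max_sub_add_min_add hn) (fun i hi => Nat.lt_one_iff.1 hi ▸ hg0) hjoin
  rw [hC] at this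
  exact this

def halfShift (s x : ℤ) : ℤ := if 0 ≤ s * x then x + s else x

def halfUnshift (s x : ℤ) : ℤ := if 0 < s * x then x - s else x

lemma strictMono_halfShift (hs : s = 1 ∨ s = -1) : StrictMono (halfShift s) := by
  intro a b hab
  unfold halfShift
  rcases hs with rfl | rfl <;> split_ifs <;> omega

lemma monotone_halfUnshift (hs : s = 1 ∨ s = -1) : Monotone (halfUnshift s) := by
  intro a b hab
  unfold halfUnshift
  rcases hs with rfl | rfl <;> split_ifs <;> omega

lemma leftInverse_halfUnshift_halfShift (hs : s = 1 ∨ s = -1) :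
    LeftInverse (halfUnshift s) (halfShift s) := by
  intro x
  unfold halfShift halfUnshift
  rcases hs with rfl | rfl <;> split_ifs <;> omega

lemma halfUnshift_zero : halfUnshift s 0 = 0 := by simp [halfUnshift]

lemma halfShift_zero (hs : s = 1 ∨ s = -1) : halfShift s 0 = s := by
  rcases hs with rfl | rfl <;> rfl

lemma sign_halfShift (hs : s = 1 ∨ s = -1) {x : ℤ} (hx : x ≠ 0) :
    (halfShift s x).sign = x.sign := by
  have : (0 < halfShift s x ↔ 0 < x) ∧ (halfShift s x < 0 ↔ x < 0) := by
    unfold halfShift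
    rcases hs with rfl | rfl <;> split_ifs <;> omega
  rcases hx.lt_or_gt with h | h
  · rw [Int.sign_eq_neg_one_of_neg h, Int.sign_eq_neg_one_of_neg (this.2.2 h)]
  · rw [Int.sign_eq_one_of_pos h, Int.sign_eq_one_of_pos (this.1.2 h)]

theorem halfShift_fst_mem_reachSet (hs : s = 1 ∨ s = -1) {x y : ℤ}
    (h : (x, y) ∈ ReachSet σ) : (halfShift s x, y) ∈ ReachSet σ := by
  obtain ⟨C, hC⟩ := h
  obtain ⟨t, ht, h1⟩ := C.first_seg
  have hjoin : unitDir (C.pts 0) (Prod.map (halfShift s) id (C.pts 1)) =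
      unitDir (C.pts 0) (C.pts 1) := by
    simp [unitDir, C.start_eq, h1, sign_halfShift hs ht.ne']
  have := C.prodMap_mem_reachSet le_rfl (by omega) (strictMono_halfShift hs) strictMono_id
    (monotone_halfUnshift hs) monotone_id (leftInverse_halfUnshift_halfShift hs) (fun _ => rfl)
    (fun i hi => by simp [Nat.lt_one_iff.1 hi, C.start_eq, halfUnshift_zero]) hjoin
  rw [hC] at this
  exact this

theorem halfShift_snd_mem_reachSet (hσ : 1 ≤ σ.length) (hs : s = 1 ∨ s = -1) {x y : ℤ}
    (h : (x, y) ∈ ReachSet σ) : (x, halfShift s y) ∈ ReachSet σ := by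
  obtain ⟨C, hC⟩ := h
  obtain ⟨t, -, h1⟩ := C.first_seg
  have h2 := C.fst_pts_two hσ
  have hy2 : (C.pts 2).2 ≠ 0 := by
    rcases C.axis_parallel 1 hσ with ⟨-, h⟩ | ⟨-, h⟩
    · rwa [h1] at h
    · exact absurd h2 h
  have hjoin : unitDir (C.pts 1) (Prod.map id (halfShift s) (C.pts 2)) =
      unitDir (C.pts 1) (C.pts 2) := by
    simp [unitDir, h1, sign_halfShift hs hy2]
  have hfix : ∀ i < 2, Prod.map id (halfUnshift s) (C.pts i) = C.pts i := by
    intro i hi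
    interval_cases i <;> simp [C.start_eq, h1, halfUnshift_zero]
  have := C.prodMap_mem_reachSet (by omega) (by omega) strictMono_id (strictMono_halfShift hs)
    monotone_id (monotone_halfUnshift hs) (fun _ => rfl) (leftInverse_halfUnshift_halfShift hs)
    hfix hjoin
  rw [hC] at this
  exact this

theorem mem_reachSet_of_zero_mem {x y : ℤ} (h : (0, y) ∈ ReachSet σ) :
    (x, y) ∈ ReachSet σ := by
  rcases eq_or_ne x 0 with rfl | hx
  · exact h
  have hs := sign_eq_one_or_neg_one hx
  have := add_sign_mul_mem_reachSet (halfShift_fst_mem_reachSet hs h) (m := |x| - 1) (n := 0)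
    (by have := abs_pos.2 hx; omega) le_rfl
  rw [halfShift_zero hs, Int.sign_sign, mul_sub_one, Int.sign_mul_abs, mul_zero, add_zero,
    add_sub_cancel] at this
  exact this

theorem mem_reachSet_of_mem_zero (hσ : 1 ≤ σ.length) {x y : ℤ} (h : (x, 0) ∈ ReachSet σ) :
    (x, y) ∈ ReachSet σ := by
  rcases eq_or_ne y 0 with rfl | hy
  · exact h
  have hs := sign_eq_one_or_neg_one hy
  have := add_sign_mul_mem_reachSet (halfShift_snd_mem_reachSet hσ hs h) (m := 0) (n := |y| - 1)
    le_rfl (by have := abs_pos.2 hy; omega)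
  rw [halfShift_zero hs, Int.sign_sign, mul_sub_one, Int.sign_mul_abs, mul_zero, add_zero,
    add_sub_cancel] at this
  exact this

end

/-- **Stretching Lemma, parts (2) and (3).** If `σ` has at least one turn, then:
if `(0, b)` with `b ≠ 0` is reachable by `σ`, the whole halfplane `H⁺((0,b))` is
contained in `A(σ)`; and if `(a, 0)` with `a ≠ 0` is reachable by `σ`, the whole
halfplane `V⁺((a,0))` is contained in `A(σ)`. -/
theorem stretching_lemma_halfplanes (σ : List Turn) (hσ : 1 ≤ σ.length) :
    (∀ b : ℤ, b ≠ 0 → ((0 : ℤ), b) ∈ ReachSet σ → Hplus (0, b) ⊆ ReachSet σ) ∧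
    (∀ a : ℤ, a ≠ 0 → (a, (0 : ℤ)) ∈ ReachSet σ → Vplus (a, 0) ⊆ ReachSet σ) := by
  refine ⟨fun b _ hb => ?_, fun a _ ha => ?_⟩
  · rintro _ ⟨i, j, hj, rfl⟩
    exact mem_reachSet_of_zero_mem (by simpa using add_sign_mul_mem_reachSet hb le_rfl hj)
  · rintro _ ⟨i, j, hi, rfl⟩
    exact mem_reachSet_of_mem_zero hσ (by simpa using add_sign_mul_mem_reachSet ha hi le_rfl)
end

section
/- Any turn sequence σ in which the numbers l of L's and r of R's satisfy |l − r| ≥ 5 contains all four types of hooks (an up hook, a down hook, a left hook, and a right hook); consequently A(σ) contains a point on each of the four signed axes, i.e., points (a,0) with a > 0, (a,0) with a < 0, (0,b) with b > 0, and (0,b) with b < 0. -/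
/-!
The prefix numbers `δᵢ` form a ±1-walk from `0` to `l - r`. If the walk passes from below `v` to
above `v`, then right after the last time it is below `v` it takes two steps up in a row, which is
a hook with prefix number `v`; when `|l - r| ≥ 5` some such `v` exists in every residue class
mod 4.

At a hook `σ_{k+1} = σ_{k+2}` the segments `p_k p_{k+1}`, `p_{k+1} p_{k+2}`, `p_{k+2} p_{k+3}`
form a U-turn. Give the segments before it the lengths `1, 2, 4, …`, the three sides of the U-turn
a huge length, and the segments after it the lengths `…, 4, 2, 1`. Any two nonadjacent segments
are then separated by a segment between them that is longer than all the other segments up to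
them combined, so the chain is simple; and adjusting the length of the last side of the U-turn
puts the endpoint on the ray from the origin along the middle side, whose direction
`δ_{k+1} mod 4` is the type of the hook.
-/

open Finset

def Turn.sign : Turn → ℤ
  | .L => 1
  | .R => -1

lemma Turn.sign_injective : Function.Injective Turn.sign := by
  intro a b; cases a <;> cases b <;> simp [Turn.sign]

lemma Turn.abs_sign (τ : Turn) : |τ.sign| = 1 := by cases τ <;> rfl

lemma delta_zero (σ : List Turn) : delta σ 0 = 0 := by simp [delta]

lemma delta_length (σ : List Turn) : delta σ σ.length = excess σ := by
  simp [delta, excess]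

lemma delta_succ (σ : List Turn) {j : ℕ} (h : j < σ.length) :
    delta σ (j + 1) = delta σ j + (σ.get ⟨j, h⟩).sign := by
  have htake : σ.take (j + 1) = σ.take j ++ [σ.get ⟨j, h⟩] := by
    rw [List.take_add_one, List.getElem?_eq_getElem h]; rfl
  rw [delta, delta, htake]
  cases σ.get ⟨j, h⟩ <;> simp [Turn.sign] <;> ring

lemma abs_delta_succ_sub (σ : List Turn) {j : ℕ} (h : j < σ.length) :
    |delta σ (j + 1) - delta σ j| = 1 := by
  rw [delta_succ σ h]; cases σ.get ⟨j, h⟩ <;> simp [Turn.sign]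

lemma exists_two_steps_up_through {d : ℕ → ℤ} {n : ℕ} (hstep : ∀ j < n, |d (j + 1) - d j| = 1)
    {v : ℤ} (h0 : d 0 < v) (hn : v < d n) :
    ∃ i, i + 2 ≤ n ∧ d (i + 1) = v ∧ d (i + 1) - d i = 1 ∧ d (i + 2) - d (i + 1) = 1 := by
  classical
  set i := Nat.findGreatest (fun j => d j < v) n
  have hi : d i < v := Nat.findGreatest_spec (P := fun j => d j < v) (Nat.zero_le n) h0
  have hge : ∀ j, i < j → j ≤ n → v ≤ d j := fun j hij hjn =>
    not_lt.mp (Nat.findGreatest_is_greatest hij hjn)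
  have hin : i < n := (Nat.findGreatest_le n).lt_of_ne fun h : i = n => by rw [h] at hi; omega
  have h₁ : |d (i + 1) - d i| = 1 := hstep i hin
  have hi₁ := hge (i + 1) (by omega) hin
  rw [abs_eq zero_le_one] at h₁
  have hin₁ : i + 1 < n := lt_of_le_of_ne hin fun h => by rw [← h] at hn; omega
  have h₂ : |d (i + 2) - d (i + 1)| = 1 := hstep (i + 1) hin₁
  have hi₂ : v ≤ d (i + 2) := hge _ (by omega) hin₁
  rw [abs_eq zero_le_one] at h₂
  exact ⟨i, hin₁, by omega, by omega, by omega⟩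

lemma exists_hook_delta_eq {σ : List Turn} {v : ℤ}
    (hv : 0 < v ∧ v < excess σ ∨ excess σ < v ∧ v < 0) :
    ∃ k, ∃ h : k + 1 < σ.length, σ.get ⟨k, by omega⟩ = σ.get ⟨k + 1, h⟩ ∧ delta σ (k + 1) = v := by
  have hstep : ∀ j < σ.length, |delta σ (j + 1) - delta σ j| = 1 := fun j hj =>
    abs_delta_succ_sub σ hj
  have hturn : ∀ k (hk : k + 1 < σ.length),
      delta σ (k + 1) - delta σ k = delta σ (k + 2) - delta σ (k + 1) →
      σ.get ⟨k, by omega⟩ = σ.get ⟨k + 1, hk⟩ := by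
    intro k hk h
    rw [delta_succ σ hk, delta_succ σ (by omega : k < σ.length)] at h
    exact Turn.sign_injective (by linarith)
  rcases hv with ⟨hv₀, hvn⟩ | ⟨hvn, hv₀⟩
  · obtain ⟨i, hi, hv, h₁, h₂⟩ := exists_two_steps_up_through hstep
      (by rwa [delta_zero]) (by rwa [delta_length])
    exact ⟨i, by omega, hturn i (by omega) (by omega), hv⟩
  · have hstep' : ∀ j < σ.length, |-delta σ (j + 1) - -delta σ j| = 1 := fun j hj => by
      rw [← abs_neg, neg_sub_neg, neg_sub]; exact hstep j hj
    obtain ⟨i, hi, hv, h₁, h₂⟩ := exists_two_steps_up_through (d := fun j => -delta σ j)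
      (v := -v) hstep' (by simp only [delta_zero]; omega) (by simp only [delta_length]; omega)
    exact ⟨i, by omega, hturn i (by omega) (by omega), by omega⟩

lemma hasHook_of_five_le_abs_excess {σ : List Turn} (h : 5 ≤ |excess σ|) {d : ℤ}
    (hd₀ : 0 ≤ d) (hd₄ : d < 4) : HasHook σ d := by
  have hv : ∃ v, v % 4 = d ∧ (0 < v ∧ v < excess σ ∨ excess σ < v ∧ v < 0) := by
    rcases le_abs'.mp h with h | h
    · exact ⟨d - 4, by omega, by omega⟩
    · exact ⟨if d = 0 then 4 else d, by split_ifs <;> omega, by split_ifs <;> omega⟩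
  obtain ⟨v, hvd, hv⟩ := hv
  obtain ⟨k, hk, heq, hδ⟩ := exists_hook_delta_eq hv
  exact ⟨k, hk, heq, hδ ▸ hvd⟩

lemma emod_four_cases (m : ℤ) : m % 4 = 0 ∨ m % 4 = 1 ∨ m % 4 = 2 ∨ m % 4 = 3 := by omega

/-- The unit vector `m` quarter turns counterclockwise from east: the segment of a chain after
the prefix with prefix number `δ` points along `heading δ`. -/
def heading (m : ℤ) : ℤ × ℤ :=
  if m % 4 = 0 then (1, 0) else if m % 4 = 1 then (0, 1) else if m % 4 = 2 then (-1, 0) else (0, -1)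

lemma heading_congr {m m' : ℤ} (h : m % 4 = m' % 4) : heading m = heading m' := by
  unfold heading; rw [h]

lemma heading_cases (m : ℤ) :
    heading m = (1, 0) ∨ heading m = (0, 1) ∨ heading m = (-1, 0) ∨ heading m = (0, -1) := by
  unfold heading; split_ifs <;> simp

lemma heading_add_sign (τ : Turn) (m : ℤ) :
    heading (m + τ.sign) = (if τ = Turn.L then rotCCW else rotCW) (heading m) := by
  rcases emod_four_cases m with h | h | h | h <;> cases τ <;>
    simp only [heading, Turn.sign, Int.add_emod m, h] <;> simp [rotCCW, rotCW]

def proj (w : ℤ × ℤ) : ℤ × ℤ →+ ℤ where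
  toFun q := w.1 * q.1 + w.2 * q.2
  map_zero' := by simp
  map_add' q q' := by simp only [Prod.fst_add, Prod.snd_add]; ring

lemma proj_apply (w q : ℤ × ℤ) : proj w q = w.1 * q.1 + w.2 * q.2 := rfl

/-- The cosine of the angle between two headings. -/
lemma proj_heading_heading (μ ν : ℤ) : proj (heading μ) (heading ν) = (heading (ν - μ)).1 := by
  rcases emod_four_cases μ with h₁ | h₁ | h₁ | h₁ <;>
    rcases emod_four_cases ν with h₂ | h₂ | h₂ | h₂ <;>
    simp only [heading, proj_apply, Int.sub_emod ν μ, h₁, h₂] <;> norm_num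

lemma abs_proj_heading_heading_le (μ ν : ℤ) : |proj (heading μ) (heading ν)| ≤ 1 := by
  rw [proj_heading_heading]; rcases heading_cases (ν - μ) with h | h | h | h <;> simp [h]

lemma proj_heading_heading_of_abs_sub_eq_one {μ ν : ℤ} (h : |ν - μ| = 1) :
    proj (heading μ) (heading ν) = 0 := by
  rw [proj_heading_heading]
  rcases abs_eq (zero_le_one' ℤ) |>.mp h with h | h <;> rw [h] <;> rfl

lemma proj_heading_heading_of_abs_sub_eq_two {μ ν : ℤ} (h : |ν - μ| = 2) :
    proj (heading μ) (heading ν) = -1 := by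
  rw [proj_heading_heading]
  rcases abs_eq (by norm_num : (0 : ℤ) ≤ 2) |>.mp h with h | h <;> rw [h] <;> rfl

lemma proj_heading_self (μ : ℤ) : proj (heading μ) (heading μ) = 1 := by
  rw [proj_heading_heading, sub_self]; rfl

lemma eq_proj_smul_heading {μ ε : ℤ} (hε : |ε| = 1) {q : ℤ × ℤ}
    (hq : proj (heading (μ + ε)) q = 0) : q = proj (heading μ) q • heading μ := by
  rcases abs_eq (zero_le_one' ℤ) |>.mp hε with rfl | rfl <;>
  rcases emod_four_cases μ with h | h | h | h <;>
    simp only [heading, proj_apply, Int.add_emod μ, h] at hq ⊢ <;> norm_num at hq ⊢ <;>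
    ext <;> simp <;> omega

lemma proj_mem_of_mem_segSet (μ : ℤ) {u v q : ℤ × ℤ} (hq : q ∈ segSet u v) :
    min (proj (heading μ) u) (proj (heading μ) v) ≤ proj (heading μ) q ∧
      proj (heading μ) q ≤ max (proj (heading μ) u) (proj (heading μ) v) := by
  obtain ⟨h₁, h₂, h₃, h₄⟩ := hq
  rcases heading_cases μ with h | h | h | h <;> simp only [proj_apply, h] <;> omega

lemma segSet_inter_eq_empty_of_proj_lt (μ : ℤ) {u v u' v' : ℤ × ℤ}
    (h : max (proj (heading μ) u) (proj (heading μ) v) <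
      min (proj (heading μ) u') (proj (heading μ) v')) :
    segSet u v ∩ segSet u' v' = ∅ := by
  refine Set.eq_empty_of_forall_notMem fun q ⟨hq, hq'⟩ => ?_
  have := proj_mem_of_mem_segSet μ hq
  have := proj_mem_of_mem_segSet μ hq'
  omega

lemma segSet_inter_segSet_eq_singleton_s7 {μ ν : ℤ} (hμν : |ν - μ| = 1) (u : ℤ × ℤ) {s s' : ℤ}
    (hs : 0 < s) :
    segSet u (u + s • heading μ) ∩ segSet (u + s • heading μ) (u + s • heading μ + s' • heading ν)
      = {u + s • heading μ} := by
  obtain ⟨ε, hε, rfl⟩ : ∃ ε, (ε = 1 ∨ ε = -1) ∧ ν = μ + ε :=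
    ⟨ν - μ, abs_eq (zero_le_one' ℤ) |>.mp hμν, by ring⟩
  rcases hε with rfl | rfl <;>
  rcases emod_four_cases μ with h | h | h | h <;>
    simp only [heading, Int.add_emod μ, h] <;> norm_num <;>
    ext q <;> simp only [segSet, Set.mem_inter_iff, Set.mem_ofPred_eq, Set.mem_singleton_iff,
      Prod.ext_iff, Prod.fst_add, Prod.snd_add] <;> norm_num <;> omega

lemma unitDir_add_smul_heading (u : ℤ × ℤ) {s : ℤ} (hs : 0 < s) (μ : ℤ) :
    unitDir u (u + s • heading μ) = heading μ := by
  rcases heading_cases μ with h | h | h | h <;> simp [unitDir, h, Int.sign_eq_one_of_pos hs]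

lemma axis_parallel_add_smul_heading (u : ℤ × ℤ) {s : ℤ} (hs : 0 < s) (μ : ℤ) :
    ((u + s • heading μ).1 = u.1 ∧ (u + s • heading μ).2 ≠ u.2) ∨
      ((u + s • heading μ).2 = u.2 ∧ (u + s • heading μ).1 ≠ u.1) := by
  rcases heading_cases μ with h | h | h | h <;> simp [h] <;> omega

def polyline (θ t : ℕ → ℤ) (j : ℕ) : ℤ × ℤ := ∑ c ∈ range j, t c • heading (θ c)

section Polyline

variable {θ t : ℕ → ℤ}

lemma polyline_zero : polyline θ t 0 = 0 := by simp [polyline]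

lemma polyline_succ (j : ℕ) : polyline θ t (j + 1) = polyline θ t j + t j • heading (θ j) := by
  simp [polyline, sum_range_succ]

lemma polyline_sub {j j' : ℕ} (h : j ≤ j') :
    polyline θ t j' - polyline θ t j = ∑ c ∈ Ico j j', t c • heading (θ c) := by
  rw [polyline, polyline, sum_Ico_eq_sub _ h]

lemma proj_polyline_succ (μ : ℤ) (j : ℕ) : proj (heading μ) (polyline θ t (j + 1)) =
    proj (heading μ) (polyline θ t j) + t j * proj (heading μ) (heading (θ j)) := by
  rw [polyline_succ, map_add, map_zsmul, smul_eq_mul]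

lemma abs_proj_sum_le (μ : ℤ) {s : Finset ℕ} (ht : ∀ c ∈ s, 0 ≤ t c) :
    |proj (heading μ) (∑ c ∈ s, t c • heading (θ c))| ≤ ∑ c ∈ s, t c := by
  rw [map_sum]
  refine (abs_sum_le_sum_abs _ _).trans (sum_le_sum fun c hc => ?_)
  rw [map_zsmul, smul_eq_mul, abs_mul, abs_of_nonneg (ht c hc)]
  exact mul_le_of_le_one_right (ht c hc) (abs_proj_heading_heading_le _ _)

lemma abs_proj_polyline_sub_le (ht : ∀ c, 0 ≤ t c) (μ : ℤ) {a b j j' : ℕ} (ha : a ≤ j)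
    (hj : j ≤ j') (hb : j' ≤ b) :
    |proj (heading μ) (polyline θ t j') - proj (heading μ) (polyline θ t j)| ≤
      ∑ c ∈ Ico a b, t c := by
  rw [← map_sub, polyline_sub hj]
  exact (abs_proj_sum_le μ fun c _ => ht c).trans
    (sum_le_sum_of_subset_of_nonneg (Ico_subset_Ico ha hb) fun c _ _ => ht c)

/-- A segment longer than the segments in between separates, along its own heading, the
segments before it from those after it; its neighbours are perpendicular to it and do not count. -/
lemma polyline_segSet_inter_eq_empty_of_long (ht : ∀ c, 0 ≤ t c) {a m b : ℕ}
    (h₁ : |θ (m + 1) - θ m| = 1) (h₂ : |θ (m + 2) - θ (m + 1)| = 1) (ha : a ≤ m) (hb : m + 2 ≤ b)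
    (hlong : ∑ c ∈ Ico a m, t c + ∑ c ∈ Ico (m + 3) (b + 1), t c < t (m + 1)) :
    segSet (polyline θ t a) (polyline θ t (a + 1)) ∩
      segSet (polyline θ t b) (polyline θ t (b + 1)) = ∅ := by
  set p : ℕ → ℤ := fun j => proj (heading (θ (m + 1))) (polyline θ t j) with hp
  have hm₁ : p (m + 1) = p m := by
    have := proj_polyline_succ (θ := θ) (t := t) (θ (m + 1)) m
    rwa [proj_heading_heading_of_abs_sub_eq_one (by rwa [abs_sub_comm]), mul_zero,
      add_zero] at this
  have hm₂ : p (m + 2) = p (m + 1) + t (m + 1) := by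
    have := proj_polyline_succ (θ := θ) (t := t) (θ (m + 1)) (m + 1)
    rwa [proj_heading_self, mul_one] at this
  have hm₃ : p (m + 3) = p (m + 2) := by
    have := proj_polyline_succ (θ := θ) (t := t) (θ (m + 1)) (m + 2)
    rwa [proj_heading_heading_of_abs_sub_eq_one h₂, mul_zero, add_zero] at this
  have hnear : ∀ j, a ≤ j → j ≤ m + 1 → p j ≤ p m + ∑ c ∈ Ico a m, t c := by
    intro j haj hj
    rcases Nat.lt_or_ge m j with hmj | hjm
    · rw [show j = m + 1 by omega, hm₁]
      linarith [sum_nonneg fun c (_ : c ∈ Ico a m) => ht c]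
    · linarith [abs_le.mp (abs_proj_polyline_sub_le (θ := θ) ht (θ (m + 1)) haj hjm le_rfl)]
  have hfar : ∀ j, m + 2 ≤ j → j ≤ b + 1 → p (m + 2) - ∑ c ∈ Ico (m + 3) (b + 1), t c ≤ p j := by
    intro j hj hjb
    rcases Nat.lt_or_ge j (m + 3) with hjm | hmj
    · rw [show j = m + 2 by omega]
      linarith [sum_nonneg fun c (_ : c ∈ Ico (m + 3) (b + 1)) => ht c]
    · linarith [abs_le.mp (abs_proj_polyline_sub_le (θ := θ) ht (θ (m + 1)) le_rfl hmj hjb)]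
  apply segSet_inter_eq_empty_of_proj_lt (θ (m + 1))
  have := hnear a le_rfl (by omega)
  have := hnear (a + 1) (by omega) (by omega)
  have := hfar b hb (by omega)
  have := hfar (b + 1) (by omega) le_rfl
  simp only [hp] at *
  omega

lemma polyline_segSet_inter_eq_empty_of_peak (ht : ∀ c, 0 ≤ t c) {n k : ℕ}
    (hθ : ∀ j < n, |θ (j + 1) - θ j| = 1)
    (hpre : ∀ m, m + 1 ≤ k → ∑ c ∈ range m, t c < t (m + 1))
    (hpeak : ∑ c ∈ range k, t c + ∑ c ∈ Ico (k + 3) (n + 1), t c < t (k + 1))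
    (hsuf : ∀ m, k + 1 ≤ m → ∑ c ∈ Ico (m + 3) (n + 1), t c < t (m + 1))
    {a b : ℕ} (hab : a + 1 < b) (hb : b ≤ n) :
    segSet (polyline θ t a) (polyline θ t (a + 1)) ∩
      segSet (polyline θ t b) (polyline θ t (b + 1)) = ∅ := by
  have hmono : ∀ {i j i' j'}, i' ≤ i → j ≤ j' → ∑ c ∈ Ico i j, t c ≤ ∑ c ∈ Ico i' j', t c :=
    fun hi hj => sum_le_sum_of_subset_of_nonneg (Ico_subset_Ico hi hj) fun c _ _ => ht c
  have hlong := fun {m} (ha : a ≤ m) (hb' : m + 2 ≤ b) =>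
    polyline_segSet_inter_eq_empty_of_long (θ := θ) ht (hθ m (by omega)) (hθ (m + 1) (by omega))
      ha hb'
  -- Separate by segment `a + 1`, `k + 1` or `b - 1`, whichever is closest to the peak.
  rcases Nat.lt_or_ge (k + 1) b with hkb | hbk
  · rcases Nat.lt_or_ge k a with hka | hak
    · refine hlong le_rfl hab ?_
      have := hmono (le_refl (a + 3)) (by omega : b + 1 ≤ n + 1)
      have := hsuf a hka
      simp only [Ico_self, sum_empty, zero_add]
      omega
    · refine hlong hak hkb ?_
      have := hmono (le_refl a) (le_refl k)
      have := hmono (Nat.zero_le a) (le_refl k)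
      have := hmono (le_refl (k + 3)) (by omega : b + 1 ≤ n + 1)
      rw [range_eq_Ico] at hpeak
      omega
  · obtain ⟨m, rfl⟩ : ∃ m, b = m + 2 := ⟨b - 2, by omega⟩
    refine hlong (by omega) le_rfl ?_
    have := hmono (Nat.zero_le a) (le_refl m)
    have := hpre m (by omega)
    rw [range_eq_Ico] at this
    simp only [Ico_self, sum_empty, add_zero]
    omega

end Polyline

lemma polyline_delta_mem_reachSet (σ : List Turn) {t : ℕ → ℤ} (ht : ∀ j ≤ σ.length, 0 < t j)
    (hdisj : ∀ a b, a + 1 < b → b ≤ σ.length →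
      segSet (polyline (delta σ) t a) (polyline (delta σ) t (a + 1)) ∩
        segSet (polyline (delta σ) t b) (polyline (delta σ) t (b + 1)) = ∅) :
    polyline (delta σ) t (σ.length + 1) ∈ ReachSet σ := by
  refine ⟨⟨polyline (delta σ) t, polyline_zero, ⟨t 0, ht 0 (Nat.zero_le _), ?_⟩, ?_, ?_, ?_,
    hdisj⟩, rfl⟩
  · simp [polyline, delta_zero, heading]
  · intro i hi
    rw [polyline_succ]
    exact axis_parallel_add_smul_heading _ (ht i hi) _
  · intro i hi
    rw [show i + 2 = i + 1 + 1 from rfl, polyline_succ (i + 1), polyline_succ i,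
      unitDir_add_smul_heading _ (ht (i + 1) hi), unitDir_add_smul_heading _ (ht i hi.le),
      delta_succ σ hi, heading_add_sign]
  · intro i hi
    rw [show i + 2 = i + 1 + 1 from rfl, polyline_succ (i + 1), polyline_succ i]
    exact segSet_inter_segSet_eq_singleton_s7 (abs_delta_succ_sub σ (by omega)) _ (ht i (by omega))

lemma sum_two_pow_lt {s : Finset ℕ} {n : ℕ} (hs : ∀ c ∈ s, c < n) :
    ∑ c ∈ s, (2 : ℤ) ^ c < 2 ^ n := by
  exact_mod_cast Nat.geomSum_lt le_rfl hs

lemma sum_Ico_two_pow_sub_lt (n a : ℕ) {b : ℕ} (hb : b ≤ n + 1) :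
    ∑ c ∈ Ico a b, (2 : ℤ) ^ (n - c) < 2 ^ (n + 1 - a) := by
  rw [sum_Ico_reflect (fun c => (2 : ℤ) ^ c) a hb]
  exact sum_two_pow_lt fun c hc => (mem_Ico.mp hc).2

def peakLengths (n k : ℕ) (H x : ℤ) (c : ℕ) : ℤ :=
  if c < k then 2 ^ c else if c ≤ k + 1 then H else if c = k + 2 then x else 2 ^ (n - c)

section PeakLengths

variable {n k : ℕ} {H x : ℤ}

lemma peakLengths_pos (hH : 0 < H) (hx : 0 < x) (c : ℕ) : 0 < peakLengths n k H x c := by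
  unfold peakLengths; split_ifs <;> positivity

lemma sum_range_peakLengths_lt {m : ℕ} (hm : m ≤ k) :
    ∑ c ∈ range m, peakLengths n k H x c < 2 ^ m := by
  rw [sum_congr rfl fun c hc => by rw [peakLengths, if_pos ((mem_range.mp hc).trans_le hm)]]
  exact sum_two_pow_lt fun c hc => mem_range.mp hc

lemma sum_Ico_peakLengths_lt {a b : ℕ} (ha : k + 3 ≤ a) (hb : b ≤ n + 1) :
    ∑ c ∈ Ico a b, peakLengths n k H x c < 2 ^ (n + 1 - a) := by
  rw [sum_congr rfl fun c hc => by
    have := (mem_Ico.mp hc).1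
    rw [peakLengths, if_neg (by omega), if_neg (by omega), if_neg (by omega)]]
  exact sum_Ico_two_pow_sub_lt n a hb

lemma peakLengths_grow (hk : k + 2 ≤ n) (hH : 2 * 2 ^ n < H) {m : ℕ} (hm : m + 1 ≤ k) :
    ∑ c ∈ range m, peakLengths n k H x c < peakLengths n k H x (m + 1) := by
  have h₁ := sum_range_peakLengths_lt (n := n) (H := H) (x := x) (by omega : m ≤ k)
  have h₂ : (2 : ℤ) ^ (m + 1) ≤ 2 ^ n := pow_le_pow_right₀ (by norm_num) (by omega)
  have h₃ : (2 : ℤ) ^ m ≤ 2 ^ (m + 1) := pow_le_pow_right₀ (by norm_num) (by omega)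
  rcases Nat.lt_or_ge (m + 1) k with hmk | hmk
  · rw [peakLengths, if_pos hmk]; omega
  · rw [peakLengths, if_neg (by omega), if_pos (by omega)]; omega

lemma peakLengths_peak (hk : k + 2 ≤ n) (hH : 2 * 2 ^ n < H) :
    ∑ c ∈ range k, peakLengths n k H x c + ∑ c ∈ Ico (k + 3) (n + 1), peakLengths n k H x c <
      peakLengths n k H x (k + 1) := by
  have h₁ := sum_range_peakLengths_lt (n := n) (H := H) (x := x) (le_refl k)
  have h₂ := sum_Ico_peakLengths_lt (n := n) (H := H) (x := x) (le_refl (k + 3)) le_rfl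
  have h₃ : (2 : ℤ) ^ k ≤ 2 ^ n := pow_le_pow_right₀ (by norm_num) (by omega)
  have h₄ : (2 : ℤ) ^ (n + 1 - (k + 3)) ≤ 2 ^ n := pow_le_pow_right₀ (by norm_num) (by omega)
  rw [peakLengths, if_neg (by omega), if_pos le_rfl]
  omega

lemma peakLengths_shrink (hx : 2 ^ n < x) {m : ℕ} (hm : k + 1 ≤ m) :
    ∑ c ∈ Ico (m + 3) (n + 1), peakLengths n k H x c < peakLengths n k H x (m + 1) := by
  have h₁ := sum_Ico_peakLengths_lt (n := n) (H := H) (x := x) (by omega : k + 3 ≤ m + 3) le_rfl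
  have h₂ : (2 : ℤ) ^ (n + 1 - (m + 3)) ≤ 2 ^ (n - (m + 1)) :=
    pow_le_pow_right₀ (by norm_num) (by omega)
  have h₃ : (2 : ℤ) ^ (n + 1 - (m + 3)) ≤ 2 ^ n := pow_le_pow_right₀ (by norm_num) (by omega)
  rcases Nat.lt_or_ge (m + 1) (k + 3) with hmk | hmk
  · rw [peakLengths, if_neg (by omega), if_neg (by omega), if_pos (by omega)]; omega
  · rw [peakLengths, if_neg (by omega), if_neg (by omega), if_neg (by omega)]; omega

end PeakLengths

lemma polyline_peakLengths (θ : ℕ → ℤ) {n k : ℕ} (hk : k + 2 ≤ n) (H x : ℤ) :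
    polyline θ (peakLengths n k H x) (n + 1) =
      ∑ c ∈ range k, (2 : ℤ) ^ c • heading (θ c) + H • heading (θ k) + H • heading (θ (k + 1)) +
        x • heading (θ (k + 2)) + ∑ c ∈ Ico (k + 3) (n + 1), (2 : ℤ) ^ (n - c) • heading (θ c) := by
  rw [polyline, ← sum_range_add_sum_Ico _ (by omega : k + 3 ≤ n + 1), sum_range_succ,
    sum_range_succ, sum_range_succ]
  congr 1
  · rw [sum_congr rfl fun c hc => by rw [peakLengths, if_pos (mem_range.mp hc)]]
    simp [peakLengths]
  · refine sum_congr rfl fun c hc => ?_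
    have := (mem_Ico.mp hc).1
    rw [peakLengths, if_neg (by omega), if_neg (by omega), if_neg (by omega)]

lemma exists_polyline_peakLengths_eq_smul_heading {θ : ℕ → ℤ} {n k : ℕ} (hk : k + 2 ≤ n)
    {μ ε : ℤ} (hε : |ε| = 1) (h₀ : θ k = μ - ε) (h₁ : θ (k + 1) = μ) (h₂ : θ (k + 2) = μ + ε) :
    ∃ x : ℤ, 2 * 2 ^ n < x ∧
      ∃ a : ℤ, 0 < a ∧ polyline θ (peakLengths n k (4 * 2 ^ n) x) (n + 1) = a • heading μ := by
  set pre := ∑ c ∈ range k, (2 : ℤ) ^ c • heading (θ c)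
  set tail := ∑ c ∈ Ico (k + 3) (n + 1), (2 : ℤ) ^ (n - c) • heading (θ c)
  have hpre : ∀ ν, |proj (heading ν) pre| < 2 ^ n := fun ν =>
    calc _ ≤ ∑ c ∈ range k, (2 : ℤ) ^ c := abs_proj_sum_le ν fun c _ => by positivity
      _ < 2 ^ k := sum_two_pow_lt fun c hc => mem_range.mp hc
      _ ≤ 2 ^ n := pow_le_pow_right₀ (by norm_num) (by omega)
  have htail : ∀ ν, |proj (heading ν) tail| < 2 ^ n := fun ν =>
    calc _ ≤ ∑ c ∈ Ico (k + 3) (n + 1), (2 : ℤ) ^ (n - c) :=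
          abs_proj_sum_le ν fun c _ => by positivity
      _ < 2 ^ (n + 1 - (k + 3)) := sum_Ico_two_pow_sub_lt n (k + 3) le_rfl
      _ ≤ 2 ^ n := pow_le_pow_right₀ (by norm_num) (by omega)
  -- `x` is chosen so that the endpoint lies on the line through the origin with heading `μ`.
  set x := 4 * 2 ^ n - proj (heading (μ + ε)) pre - proj (heading (μ + ε)) tail
  have hend := polyline_peakLengths θ hk (4 * 2 ^ n) x
  rw [h₀, h₁, h₂] at hend
  have hμε : |μ + ε - μ| = 1 := by rwa [add_sub_cancel_left]
  have hμε' : |μ - ε - μ| = 1 := by rwa [sub_sub_cancel_left, abs_neg]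
  have hf : proj (heading (μ + ε)) (polyline θ (peakLengths n k (4 * 2 ^ n) x) (n + 1)) = 0 := by
    have hanti : |μ - ε - (μ + ε)| = 2 := by
      rw [show μ - ε - (μ + ε) = -2 * ε by ring, abs_mul, hε]; rfl
    rw [hend]
    simp only [map_add, map_zsmul, smul_eq_mul, proj_heading_self,
      proj_heading_heading_of_abs_sub_eq_two hanti,
      proj_heading_heading_of_abs_sub_eq_one (by rwa [abs_sub_comm] : |μ - (μ + ε)| = 1)]
    ring
  refine ⟨x, by linarith [abs_lt.mp (hpre (μ + ε)), abs_lt.mp (htail (μ + ε))], _, ?_,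
    eq_proj_smul_heading hε hf⟩
  rw [hend]
  simp only [map_add, map_zsmul, smul_eq_mul, proj_heading_self,
    proj_heading_heading_of_abs_sub_eq_one hμε, proj_heading_heading_of_abs_sub_eq_one hμε']
  linarith [abs_lt.mp (hpre μ), abs_lt.mp (htail μ)]

lemma exists_smul_heading_mem_reachSet_of_hook (σ : List Turn) {k : ℕ} (hk : k + 1 < σ.length)
    (hhook : σ.get ⟨k, by omega⟩ = σ.get ⟨k + 1, hk⟩) :
    ∃ a : ℤ, 0 < a ∧ a • heading (delta σ (k + 1)) ∈ ReachSet σ := by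
  have hk₂ : k + 2 ≤ σ.length := hk
  have h₀ := delta_succ σ (by omega : k < σ.length)
  have h₂ : delta σ (k + 2) = delta σ (k + 1) + _ := delta_succ σ hk
  rw [hhook] at h₀
  obtain ⟨x, hx, a, ha, hend⟩ := exists_polyline_peakLengths_eq_smul_heading hk₂
    (Turn.abs_sign _) (by rw [h₀]; ring) rfl h₂
  have h2n : (0 : ℤ) < 2 ^ σ.length := by positivity
  have hpos := peakLengths_pos (n := σ.length) (k := k) (H := 4 * 2 ^ σ.length) (by linarith)
    (by linarith : 0 < x)
  refine ⟨a, ha, hend ▸ polyline_delta_mem_reachSet σ (fun j _ => hpos j) fun a b hab hb => ?_⟩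
  exact polyline_segSet_inter_eq_empty_of_peak (fun c => (hpos c).le)
    (fun j hj => abs_delta_succ_sub σ hj) (fun m hm => peakLengths_grow hk₂ (by linarith) hm)
    (peakLengths_peak hk₂ (by linarith)) (fun m hm => peakLengths_shrink (by linarith) hm) hab hb

lemma HasHook.exists_smul_heading_mem_reachSet {σ : List Turn} {d : ℤ} (h : HasHook σ d)
    (hd₀ : 0 ≤ d) (hd₄ : d < 4) : ∃ a : ℤ, 0 < a ∧ a • heading d ∈ ReachSet σ := by
  obtain ⟨k, hk, hhook, hδ⟩ := h
  rw [← heading_congr (show delta σ (k + 1) % 4 = d % 4 by omega)]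
  exact exists_smul_heading_mem_reachSet_of_hook σ hk hhook

/-- Any turn sequence with `|l - r| ≥ 5` contains all four types of hooks, and
consequently `A(σ)` contains a point on each of the four signed axes. -/
theorem large_excess_all_hooks (σ : List Turn) (h : 5 ≤ |excess σ|) :
    HasHook σ 1 ∧ HasHook σ 3 ∧ HasHook σ 0 ∧ HasHook σ 2 ∧
    (∃ a : ℤ, 0 < a ∧ (a, (0 : ℤ)) ∈ ReachSet σ) ∧
    (∃ a : ℤ, a < 0 ∧ (a, (0 : ℤ)) ∈ ReachSet σ) ∧
    (∃ b : ℤ, 0 < b ∧ ((0 : ℤ), b) ∈ ReachSet σ) ∧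
    (∃ b : ℤ, b < 0 ∧ ((0 : ℤ), b) ∈ ReachSet σ) := by
  have hook : ∀ d, 0 ≤ d → d < 4 → HasHook σ d := fun d hd₀ hd₄ =>
    hasHook_of_five_le_abs_excess h hd₀ hd₄
  have axis : ∀ d, 0 ≤ d → d < 4 → ∃ a : ℤ, 0 < a ∧ a • heading d ∈ ReachSet σ :=
    fun d hd₀ hd₄ => (hook d hd₀ hd₄).exists_smul_heading_mem_reachSet hd₀ hd₄
  obtain ⟨a₀, ha₀, h₀⟩ := axis 0 le_rfl (by norm_num)
  obtain ⟨a₁, ha₁, h₁⟩ := axis 1 zero_le_one (by norm_num)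
  obtain ⟨a₂, ha₂, h₂⟩ := axis 2 zero_le_two (by norm_num)
  obtain ⟨a₃, ha₃, h₃⟩ := axis 3 (by norm_num) (by norm_num)
  refine ⟨hook 1 zero_le_one (by norm_num), hook 3 (by norm_num) (by norm_num),
    hook 0 le_rfl (by norm_num), hook 2 zero_le_two (by norm_num),
    ⟨a₀, ha₀, by simpa [heading] using h₀⟩, ⟨-a₂, by omega, by simpa [heading] using h₂⟩,
    ⟨a₁, ha₁, by simpa [heading] using h₁⟩, ⟨-a₃, by omega, by simpa [heading] using h₃⟩⟩
end
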